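/- arXiv:2501.18048 — 5 statements merged into one kernel-verified Lean document; each statement's English description precedes it below -/
import Mathlib

section
/- Let F, f : ℝ → ℝ be functions such that F(s) = 2e^γ/s and f(s) = 0 for all 0 < s ≤ 2, the functions s ↦ s·F(s) and s ↦ s·f(s) are continuous on [2,∞) and differentiable on (2,∞), and for all s > 2 one has (s·F(s))′ = f(s−1) and (s·f(s))′ = F(s−1). Then F(s) = 2e^γ/s for all 1 ≤ s ≤ 3, and f(s) = 2e^γ·log(s−1)/s for all 2 ≤ s ≤ 4. -/
open Real Set

lemma const_of_deriv_zero_aux {g : ℝ → ℝ} {a b : ℝ}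
    (hc : ContinuousOn g (Icc a b)) (hd : ∀ x ∈ Ioo a b, HasDerivAt g 0 x) :
    ∀ x ∈ Icc a b, g x = g a := by
  have hdiff : DifferentiableOn ℝ g (interior (Icc a b)) := by
    rw [interior_Icc]
    exact fun x hx => ((hd x hx).differentiableAt).differentiableWithinAt
  have hder : ∀ x ∈ interior (Icc a b), deriv g x = 0 := by
    rw [interior_Icc]; exact fun x hx => (hd x hx).deriv
  have hmono : MonotoneOn g (Icc a b) :=
    monotoneOn_of_deriv_nonneg (convex_Icc a b) hc hdiff (fun x hx => (hder x hx).ge)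
  have hanti : AntitoneOn g (Icc a b) :=
    antitoneOn_of_deriv_nonpos (convex_Icc a b) hc hdiff (fun x hx => (hder x hx).le)
  intro x hx
  have ha : a ∈ Icc a b := ⟨le_refl a, hx.1.trans hx.2⟩
  exact le_antisymm (hanti ha hx hx.1) (hmono ha hx hx.1)

/-- Explicit form of the linear-sieve functions `F` and `f` on initial ranges:
if `F(s) = 2e^γ/s` and `f(s) = 0` for `0 < s ≤ 2`, the maps `s ↦ s·F(s)` and `s ↦ s·f(s)`
are continuous on `[2,∞)` and satisfy `(sF(s))' = f(s−1)` and `(sf(s))' = F(s−1)` for `s > 2`,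
then `F(s) = 2e^γ/s` for `1 ≤ s ≤ 3` and `f(s) = 2e^γ·log(s−1)/s` for `2 ≤ s ≤ 4`. -/
theorem linear_sieve_functions_initial_values (F f : ℝ → ℝ)
    (hF0 : ∀ s : ℝ, 0 < s → s ≤ 2 → F s = 2 * exp eulerMascheroniConstant / s)
    (hf0 : ∀ s : ℝ, 0 < s → s ≤ 2 → f s = 0)
    (hFcont : ContinuousOn (fun s => s * F s) (Ici 2))
    (hfcont : ContinuousOn (fun s => s * f s) (Ici 2))
    (hFderiv : ∀ s : ℝ, 2 < s → HasDerivAt (fun t => t * F t) (f (s - 1)) s)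
    (hfderiv : ∀ s : ℝ, 2 < s → HasDerivAt (fun t => t * f t) (F (s - 1)) s) :
    (∀ s : ℝ, 1 ≤ s → s ≤ 3 → F s = 2 * exp eulerMascheroniConstant / s) ∧
    (∀ s : ℝ, 2 ≤ s → s ≤ 4 →
      f s = 2 * exp eulerMascheroniConstant * Real.log (s - 1) / s) := by
  set c : ℝ := 2 * exp eulerMascheroniConstant with hc
  -- step 1: s * F s = c on [2,3]
  have hgF : ∀ s ∈ Icc (2:ℝ) 3, s * F s = c := by
    have := const_of_deriv_zero_aux (g := fun s => s * F s) (a := 2) (b := 3)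
      (hFcont.mono (fun x hx => hx.1))
      (fun x hx => by
        have h0 : f (x - 1) = 0 := hf0 _ (by linarith [hx.1]) (by linarith [hx.2])
        simpa [h0] using hFderiv x hx.1)
    intro s hs
    have h2 : (2:ℝ) * F 2 = c := by
      rw [hF0 2 (by norm_num) le_rfl]; field_simp
    simpa [h2] using this s hs
  have hF13 : ∀ s : ℝ, 1 ≤ s → s ≤ 3 → F s = c / s := by
    intro s h1 h3
    have hs0 : s ≠ 0 := by linarith
    rcases le_or_gt s 2 with h | h
    · exact hF0 s (by linarith) h
    · have := hgF s ⟨h.le, h3⟩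
      field_simp
      linarith [this]
  constructor
  · exact hF13
  -- step 2: s * f s - c * log (s - 1) constant = 0 on [2,4]
  · have hgf : ∀ s ∈ Icc (2:ℝ) 4, s * f s - c * Real.log (s - 1) = 2 * f 2 - c * Real.log (2 - 1) := by
      apply const_of_deriv_zero_aux (g := fun s => s * f s - c * Real.log (s - 1))
      · apply ContinuousOn.sub (hfcont.mono (fun x hx => hx.1))
        apply ContinuousOn.mul continuousOn_const
        apply ContinuousOn.log (by fun_prop)
        intro x hx
        have h1 := hx.1
        intro h; linarith [hx.1]
      · intro x hx
        have hx1 : (1:ℝ) < x - 1 := by linarith [hx.1]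
        have hFx : F (x - 1) = c / (x - 1) := hF13 (x - 1) hx1.le (by linarith [hx.2])
        have hlog : HasDerivAt (fun t : ℝ => c * Real.log (t - 1)) (c * (x - 1)⁻¹) x := by
          have h1 : HasDerivAt (fun t : ℝ => Real.log (t - 1)) ((x - 1)⁻¹) x := by
            have := (Real.hasDerivAt_log (x := x - 1) (by intro h; linarith)).comp x
              ((hasDerivAt_id x).sub_const 1)
            rw [mul_one] at this; exact this
          simpa using h1.const_mul c
        have := (hfderiv x hx.1).sub hlog
        have heq : F (x - 1) - c * (x - 1)⁻¹ = 0 := by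
          rw [hFx]; field_simp; ring
        rwa [heq] at this
    intro s h2 h4
    have hs0 : s ≠ 0 := by linarith
    have hf2 : f 2 = 0 := hf0 2 (by norm_num) le_rfl
    have := hgf s ⟨h2, h4⟩
    norm_num [hf2] at this
    field_simp
    linarith [this]
end

section
/- Let X ≥ 2 be a real number, k₁ a real number and k₂ an integer with k₁ ≥ k₂ ≥ 2, and set z = X^{1/k₁} and y = X^{1/k₂}. Let a be a positive integer with a ≤ X such that every prime factor of a is at least z and such that the number of prime factors of a counted with multiplicity lying in the interval [z, y) is at most 1. Then Ω(a) ≤ k₂. -/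
open ArithmeticFunction ArithmeticFunction.Omega Real

lemma cardFactors_eq_sum_primeFactors (a : ℕ) :
    Ω a = ∑ p ∈ a.primeFactors, a.factorization p := by
  rw [cardFactors_apply]
  simp only [← Nat.primeFactorsList_count_eq, ← Nat.toFinset_factors]
  have := Multiset.toFinset_sum_count_eq (a.primeFactorsList : Multiset ℕ)
  simpa using this.symm

lemma cast_eq_prod_primeFactors (a : ℕ) (ha : a ≠ 0) :
    (a : ℝ) = ∏ p ∈ a.primeFactors, (p : ℝ) ^ (a.factorization p) := by
  conv_lhs => rw [← Nat.factorization_prod_pow_eq_self ha]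
  rw [Nat.prod_factorization_eq_prod_primeFactors]
  push_cast
  rfl

/-- If `a ≤ X`, every prime factor of `a` is at least `z = X^{1/k₁}`, and at most one prime
factor of `a` (with multiplicity) lies in `[z, y)` where `y = X^{1/k₂}`, then `Ω(a) ≤ k₂`. -/
theorem omega_le_of_one_small_factor (X : ℝ) (hX : 2 ≤ X)
    (k₁ : ℝ) (k₂ : ℤ) (hk₁ : (k₂ : ℝ) ≤ k₁) (hk₂ : 2 ≤ k₂)
    (z y : ℝ) (hz : z = X ^ (1 / k₁)) (hy : y = X ^ (1 / (k₂ : ℝ)))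
    (a : ℕ) (ha : 0 < a) (haX : (a : ℝ) ≤ X)
    (hlarge : ∀ p : ℕ, p.Prime → p ∣ a → z ≤ (p : ℝ))
    (hsmall : ∑ q ∈ a.primeFactors.filter (fun q : ℕ => z ≤ (q : ℝ) ∧ (q : ℝ) < y),
        a.factorization q ≤ 1) :
    (Ω a : ℤ) ≤ k₂ := by
  set m := k₂.toNat with hmdef
  have hmk : (m : ℤ) = k₂ := Int.toNat_of_nonneg (by omega)
  have hm2 : 2 ≤ m := by omega
  by_contra hcon
  push_neg at hcon
  have hn : m + 1 ≤ Ω a := by omega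
  have hX0 : (0 : ℝ) < X := by linarith
  have hX1 : (1 : ℝ) < X := by linarith
  have hmR : ((m : ℝ)) = (k₂ : ℝ) := by exact_mod_cast congrArg (Int.cast : ℤ → ℝ) hmk
  have hk₂R : (0 : ℝ) < (k₂ : ℝ) := by
    have : (2 : ℝ) ≤ (k₂ : ℝ) := by exact_mod_cast hk₂
    linarith
  have hk₁pos : 0 < k₁ := lt_of_lt_of_le hk₂R hk₁
  have hz1 : 1 < z := by
    rw [hz]
    rw [Real.one_lt_rpow_iff_of_pos hX0]
    exact Or.inl ⟨hX1, by positivity⟩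
  have hy1 : 1 < y := by
    rw [hy]
    rw [Real.one_lt_rpow_iff_of_pos hX0]
    exact Or.inl ⟨hX1, by positivity⟩
  have hzy : z ≤ y := by
    rw [hz, hy, Real.rpow_le_rpow_left_iff hX1]
    exact one_div_le_one_div_of_le hk₂R hk₁
  have hyX : y ^ m = X := by
    rw [hy, ← Real.rpow_natCast (X ^ (1 / (k₂ : ℝ))) m, ← Real.rpow_mul hX0.le]
    rw [show (1 / (k₂ : ℝ)) * (m : ℝ) = 1 by rw [hmR]; field_simp]
    exact Real.rpow_one X
  set P := fun q : ℕ => z ≤ (q : ℝ) ∧ (q : ℝ) < y with hP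
  set S := a.primeFactors.filter P with hS
  set L := a.primeFactors.filter (fun q => ¬ P q) with hL
  set sS := ∑ p ∈ S, a.factorization p with hsS
  set sL := ∑ p ∈ L, a.factorization p with hsL
  have hsum : sS + sL = Ω a := by
    rw [hsS, hsL, cardFactors_eq_sum_primeFactors a]
    exact Finset.sum_filter_add_sum_filter_not _ _ _
  have hsS1 : sS ≤ 1 := hsmall
  -- lower bounds on products
  have hprodS : z ^ sS ≤ ∏ p ∈ S, (p : ℝ) ^ (a.factorization p) := by
    rw [hsS, ← Finset.prod_pow_eq_pow_sum]
    apply Finset.prod_le_prod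
    · intro p _; positivity
    · intro p hp
      rw [hS, Finset.mem_filter] at hp
      exact pow_le_pow_left₀ (by linarith) hp.2.1 _
  have hprodL : y ^ sL ≤ ∏ p ∈ L, (p : ℝ) ^ (a.factorization p) := by
    rw [hsL, ← Finset.prod_pow_eq_pow_sum]
    apply Finset.prod_le_prod
    · intro p _; positivity
    · intro p hp
      rw [hL, Finset.mem_filter] at hp
      have hple := hlarge p (Nat.prime_of_mem_primeFactors hp.1)
        (Nat.dvd_of_mem_primeFactors hp.1)
      have : y ≤ (p : ℝ) := by
        by_contra hcp
        exact hp.2 ⟨hple, by linarith⟩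
      exact pow_le_pow_left₀ (by linarith) this _
  have hsplit : z ^ sS * y ^ sL ≤ (a : ℝ) := by
    rw [cast_eq_prod_primeFactors a ha.ne',
      ← Finset.prod_filter_mul_prod_filter_not a.primeFactors P]
    exact mul_le_mul hprodS hprodL (by positivity) (by positivity)
  have hy0 : (0 : ℝ) < y := by linarith
  -- contradiction
  rcases Nat.le_one_iff_eq_zero_or_eq_one.mp hsS1 with h0 | h1
  · -- sS = 0, so sL ≥ m + 1
    have hsLm : m + 1 ≤ sL := by omega
    have : y ^ (m + 1) ≤ y ^ sL := pow_le_pow_right₀ (by linarith) hsLm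
    have hXy : X * y ≤ (a : ℝ) := by
      calc X * y = y ^ m * y := by rw [hyX]
        _ = y ^ (m + 1) := by ring
        _ ≤ y ^ sL := this
        _ = z ^ sS * y ^ sL := by rw [h0]; ring
        _ ≤ (a : ℝ) := hsplit
    nlinarith
  · -- sS = 1, so sL ≥ m
    have hsLm : m ≤ sL := by omega
    have : y ^ m ≤ y ^ sL := pow_le_pow_right₀ (by linarith) hsLm
    have hXz : z * X ≤ (a : ℝ) := by
      calc z * X = z * y ^ m := by rw [hyX]
        _ ≤ z * y ^ sL := by nlinarith
        _ = z ^ sS * y ^ sL := by rw [h1]; ring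
        _ ≤ (a : ℝ) := hsplit
    nlinarith
end

section
/- Let N be a real number with N > 1.98·10^28, let A = {a ∈ ℤ : N < a < N + 2√N}, X = max(A), z = X^{1/8} and y = X^{1/4}. Then Σ_{q prime, z ≤ q < y} |A_{q²}| ≤ 0.01·|A|·log|A|/z + 0.07·y. -/
open Finset Real

lemma sum_blocks (m : ℕ) (hm : 31 ≤ m) (K : ℕ) :
    ∑ n ∈ (Finset.Ico m (m + 30*K)).filter (fun n => Nat.Coprime 30 n), ((n:ℝ)^2)⁻¹
      ≤ (8/30) * (((m:ℝ) - 30)⁻¹ - ((m:ℝ) + 30*K - 30)⁻¹) := by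
  induction K with
  | zero => simp
  | succ K ih =>
    have hsplit : Finset.Ico m (m + 30*(K+1)) =
        Finset.Ico m (m + 30*K) ∪ Finset.Ico (m + 30*K) (m + 30*K + 30) := by
      rw [Finset.Ico_union_Ico_eq_Ico (by omega) (by omega)]
      ring_nf
    rw [hsplit, Finset.filter_union, Finset.sum_union]
    · have hblock : ∑ n ∈ (Finset.Ico (m + 30*K) (m + 30*K + 30)).filter
          (fun n => Nat.Coprime 30 n), ((n:ℝ)^2)⁻¹
          ≤ 8 * (((m:ℝ) + 30*K)^2)⁻¹ := by
        have hcard : ((Finset.Ico (m + 30*K) (m + 30*K + 30)).filter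
            (fun n => Nat.Coprime 30 n)).card = 8 := by
          have := Nat.filter_coprime_Ico_eq_totient 30 (m + 30*K)
          simpa [show Nat.totient 30 = 8 by decide] using this
        calc ∑ n ∈ (Finset.Ico (m + 30*K) (m + 30*K + 30)).filter
              (fun n => Nat.Coprime 30 n), ((n:ℝ)^2)⁻¹
            ≤ ∑ _n ∈ (Finset.Ico (m + 30*K) (m + 30*K + 30)).filter
              (fun n => Nat.Coprime 30 n), (((m:ℝ) + 30*K)^2)⁻¹ := by
              apply Finset.sum_le_sum
              intro n hn
              simp only [Finset.mem_filter, Finset.mem_Ico] at hn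
              have h1 : (m:ℝ) + 30*K ≤ (n:ℝ) := by push_cast; exact_mod_cast Nat.cast_le.mpr hn.1.1
              have h0 : (0:ℝ) < (m:ℝ) + 30*K := by positivity
              apply inv_anti₀ (by positivity)
              nlinarith
          _ = 8 * (((m:ℝ) + 30*K)^2)⁻¹ := by rw [Finset.sum_const, hcard]; push_cast; ring
      have harith : 8 * (((m:ℝ) + 30*K)^2)⁻¹
          ≤ (8/30) * (((m:ℝ) + 30*K - 30)⁻¹ - ((m:ℝ) + 30*K)⁻¹) := by
        have ha : (30:ℝ) < (m:ℝ) + 30*K := by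
          have : (31:ℝ) ≤ m := by exact_mod_cast hm
          have hK : (0:ℝ) ≤ 30*(K:ℝ) := by positivity
          linarith
        have ha0 : (0:ℝ) < (m:ℝ) + 30*K - 30 := by linarith
        have ha1 : (0:ℝ) < (m:ℝ) + 30*K := by linarith
        have e1 : ((m:ℝ) + 30*K - 30)⁻¹ - ((m:ℝ) + 30*K)⁻¹
            = 30 * (((m:ℝ) + 30*K) * ((m:ℝ) + 30*K - 30))⁻¹ := by
          field_simp
          ring
        rw [e1]
        have e2 : (((m:ℝ) + 30*K)^2)⁻¹ ≤ (((m:ℝ) + 30*K) * ((m:ℝ) + 30*K - 30))⁻¹ := by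
          apply inv_anti₀ (by nlinarith) (by nlinarith)
        linarith
      push_cast at ih hblock harith ⊢
      have heq : ((m:ℝ) + 30*((K:ℝ)+1) - 30)⁻¹ = ((m:ℝ) + 30*(K:ℝ))⁻¹ := by
        norm_num; ring_nf
      rw [heq]
      linarith
    · apply Finset.disjoint_filter_filter
      exact Finset.Ico_disjoint_Ico_consecutive _ _ _

lemma sum_coprime30 (m M : ℕ) (hm : 31 ≤ m) :
    ∑ n ∈ (Finset.Ico m M).filter (fun n => Nat.Coprime 30 n), ((n:ℝ)^2)⁻¹
      ≤ (4/15) * ((m:ℝ) - 30)⁻¹ := by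
  have hsub : (Finset.Ico m M).filter (fun n => Nat.Coprime 30 n)
      ⊆ (Finset.Ico m (m + 30*M)).filter (fun n => Nat.Coprime 30 n) := by
    apply Finset.filter_subset_filter
    apply Finset.Ico_subset_Ico le_rfl
    omega
  have h1 : ∑ n ∈ (Finset.Ico m M).filter (fun n => Nat.Coprime 30 n), ((n:ℝ)^2)⁻¹
      ≤ ∑ n ∈ (Finset.Ico m (m + 30*M)).filter (fun n => Nat.Coprime 30 n), ((n:ℝ)^2)⁻¹ := by
    apply Finset.sum_le_sum_of_subset_of_nonneg hsub
    intro n _ _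
    positivity
  have h2 := sum_blocks m hm M
  have hm' : (31:ℝ) ≤ (m:ℝ) := by exact_mod_cast hm
  have h3 : (0:ℝ) < (m:ℝ) + 30*M - 30 := by
    have : (0:ℝ) ≤ 30*(M:ℝ) := by positivity
    linarith
  have h4 : (0:ℝ) ≤ ((m:ℝ) + 30*M - 30)⁻¹ := by positivity
  calc _ ≤ _ := h1
    _ ≤ (8/30) * (((m:ℝ) - 30)⁻¹ - ((m:ℝ) + 30*M - 30)⁻¹) := h2
    _ ≤ (4/15) * ((m:ℝ) - 30)⁻¹ := by linarith

set_option maxHeartbeats 2000000 in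
/-- For `N > 1.98·10^28`, `A = ℤ ∩ (N, N + 2√N)`, `X = max A`, `z = X^{1/8}`, `y = X^{1/4}`,
we have `Σ_{q prime, z ≤ q < y} |A_{q²}| ≤ 0.01·|A|·log|A|/z + 0.07·y`. -/
theorem q_squared_condition (N : ℝ) (hN : N > 1.98 * 10 ^ 28)
    (A : Finset ℕ)
    (hAdef : ∀ a : ℕ, a ∈ A ↔ N < (a : ℝ) ∧ (a : ℝ) < N + 2 * Real.sqrt N)
    (hA : A.Nonempty)
    (X z y : ℝ) (hX : X = A.max' hA)
    (hz : z = X ^ (1 / 8 : ℝ)) (hy : y = X ^ (1 / 4 : ℝ)) :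
    ∑ q ∈ (Finset.range ⌈y⌉₊).filter (fun q : ℕ => q.Prime ∧ z ≤ (q : ℝ)),
        ((A.filter (fun a => q ^ 2 ∣ a)).card : ℝ)
      ≤ 0.01 * A.card * Real.log A.card / z + 0.07 * y := by
  have hN0 : (0:ℝ) < N := by norm_num at hN ⊢; linarith
  set s : ℝ := Real.sqrt N with hs
  have hs0 : 0 < s := Real.sqrt_pos.mpr hN0
  have hs14 : (1.4 * 10^14 : ℝ) < s := by
    rw [hs, show (1.4 * 10^14 : ℝ) = Real.sqrt ((1.4*10^14)^2) from
      (Real.sqrt_sq (by norm_num)).symm]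
    apply Real.sqrt_lt_sqrt (by positivity)
    norm_num at hN ⊢
    linarith
  -- X bounds
  have hXmem : A.max' hA ∈ A := A.max'_mem hA
  have hXN : N < X := by rw [hX]; exact ((hAdef _).mp hXmem).1
  have hXub : X < N + 2*s := by rw [hX]; exact ((hAdef _).mp hXmem).2
  have hX0 : (0:ℝ) < X := lt_trans hN0 hXN
  -- z, y relations
  have hz0 : 0 < z := by rw [hz]; positivity
  have hy0 : 0 < y := by rw [hy]; positivity
  have hz4 : z^(4:ℕ) = Real.sqrt X := by
    rw [hz, ← Real.rpow_natCast (X ^ (1/8 : ℝ)) 4, ← Real.rpow_mul hX0.le]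
    norm_num
    exact (Real.sqrt_eq_rpow X).symm
  have hyz2 : y = z^(2:ℕ) := by
    rw [hz, hy, ← Real.rpow_natCast (X ^ (1/8 : ℝ)) 2, ← Real.rpow_mul hX0.le]
    norm_num
  -- sqrt bounds
  have hz4lb : s < z^(4:ℕ) := by
    rw [hz4, hs]
    exact Real.sqrt_lt_sqrt hN0.le hXN
  have hz4ub : z^(4:ℕ) < s + 1 := by
    rw [hz4]
    have h2 : X < (s+1)^2 := by
      have := Real.sq_sqrt hN0.le
      nlinarith
    calc Real.sqrt X < Real.sqrt ((s+1)^2) := Real.sqrt_lt_sqrt hX0.le h2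
      _ = s + 1 := Real.sqrt_sq (by linarith)
  have hz3400 : (3400:ℝ) < z := by
    by_contra h
    push_neg at h
    have h4 : z^(4:ℕ) ≤ (3400:ℝ)^(4:ℕ) := pow_le_pow_left₀ hz0.le h 4
    norm_num at h4
    linarith
  -- card lower bound
  have hcard : 2*s - 1 ≤ (A.card : ℝ) := by
    set n0 := ⌊N⌋₊ with hn0
    set K := ⌈2*s⌉₊ - 1 with hK
    have hceil1 : 1 ≤ ⌈2*s⌉₊ := Nat.ceil_pos.mpr (by linarith : (0:ℝ) < 2*s)
    have hKcast : (K:ℝ) = (⌈2*s⌉₊:ℝ) - 1 := by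
      rw [hK]; push_cast [Nat.cast_sub hceil1]; ring
    have hKlt : (K:ℝ) < 2*s := by
      rw [hKcast]
      have := Nat.ceil_lt_add_one (by positivity : (0:ℝ) ≤ 2*s)
      linarith
    have hKge : 2*s - 1 ≤ (K:ℝ) := by
      rw [hKcast]
      have := Nat.le_ceil (2*s)
      linarith
    have hsub : Finset.Icc (n0+1) (n0+K) ⊆ A := by
      intro j hj
      rw [Finset.mem_Icc] at hj
      rw [hAdef]
      constructor
      · have h1 : N < (n0:ℝ) + 1 := Nat.lt_floor_add_one N
        have h2 : (n0:ℝ) + 1 ≤ (j:ℝ) := by exact_mod_cast hj.1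
        linarith
      · have h1 : (j:ℝ) ≤ (n0:ℝ) + (K:ℝ) := by exact_mod_cast hj.2
        have h2 : (n0:ℝ) ≤ N := Nat.floor_le hN0.le
        linarith
    have hcardsub := Finset.card_le_card hsub
    rw [Nat.card_Icc] at hcardsub
    have : n0 + K + 1 - (n0 + 1) = K := by omega
    rw [this] at hcardsub
    calc 2*s - 1 ≤ (K:ℝ) := hKge
      _ ≤ (A.card : ℝ) := by exact_mod_cast hcardsub
  have hcardpos : (0:ℝ) < (A.card : ℝ) := by linarith
  have hlog : (32:ℝ) ≤ Real.log (A.card) := by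
    rw [Real.le_log_iff_exp_le hcardpos]
    have he : Real.exp 32 = Real.exp 1 ^ (32:ℕ) := by
      rw [← Real.exp_nat_mul]; norm_num
    have he2 : Real.exp 1 ^ (32:ℕ) ≤ (2.7182818286:ℝ) ^ (32:ℕ) :=
      pow_le_pow_left₀ (Real.exp_pos 1).le Real.exp_one_lt_d9.le 32
    have he3 : (2.7182818286:ℝ) ^ (32:ℕ) ≤ 2.8 * 10^14 - 1 := by norm_num
    rw [he]
    linarith
  -- per q bound
  have hperq : ∀ q : ℕ, q.Prime → z ≤ (q:ℝ) →
      ((A.filter (fun a => q ^ 2 ∣ a)).card : ℝ) ≤ 2*s/((q:ℝ)^2) + 1 := by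
    intro q hqp hqz
    have hq0 : (0:ℝ) < (q:ℝ) := by linarith
    have hq2 : (0:ℝ) < (q:ℝ)^2 := by positivity
    have hq2n : 0 < q^2 := pow_pos hqp.pos 2
    set t1 := ⌊N/((q:ℝ)^2)⌋₊ with ht1
    set t2 := ⌊(N+2*s)/((q:ℝ)^2)⌋₊ with ht2
    have hmaps : ∀ a ∈ A.filter (fun a => q ^ 2 ∣ a), a / q^2 ∈ Finset.Ioc t1 t2 := by
      intro a ha
      rw [Finset.mem_filter] at ha
      obtain ⟨haA, hdvd⟩ := ha
      obtain ⟨hN_a, ha_ub⟩ := (hAdef a).mp haA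
      have heq : (a / q^2) * q^2 = a := Nat.div_mul_cancel hdvd
      have heqR : ((a/q^2 : ℕ):ℝ) * ((q:ℝ)^2) = (a:ℝ) := by exact_mod_cast heq
      rw [Finset.mem_Ioc]
      constructor
      · have h1 : N / ((q:ℝ)^2) < ((a/q^2 : ℕ):ℝ) := by
          rw [div_lt_iff₀ hq2]
          linarith [heqR]
        have h2 : (t1:ℝ) ≤ N / ((q:ℝ)^2) := Nat.floor_le (by positivity)
        exact_mod_cast lt_of_le_of_lt h2 h1
      · apply Nat.le_floor
        rw [le_div_iff₀ hq2]
        linarith [heqR]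
    have hinj : Set.InjOn (fun a => a / q^2) (A.filter (fun a => q ^ 2 ∣ a)) := by
      intro a ha b hb hab
      rw [Finset.mem_coe, Finset.mem_filter] at ha hb
      have ha' := Nat.div_mul_cancel ha.2
      have hb' := Nat.div_mul_cancel hb.2
      simp only at hab
      rw [← ha', ← hb', hab]
    have hcle := Finset.card_le_card_of_injOn _ hmaps hinj
    rw [Nat.card_Ioc] at hcle
    have ht12 : t1 ≤ t2 := Nat.floor_mono (by
      apply div_le_div_of_nonneg_right ?_ hq2.le <;> linarith)
    have hc1 : ((A.filter (fun a => q ^ 2 ∣ a)).card : ℝ) ≤ ((t2 - t1 : ℕ):ℝ) := by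
      exact_mod_cast hcle
    have hc2 : ((t2 - t1 : ℕ):ℝ) = (t2:ℝ) - (t1:ℝ) := by
      rw [Nat.cast_sub ht12]
    have ht2ub : (t2:ℝ) ≤ (N+2*s)/((q:ℝ)^2) := Nat.floor_le (by positivity)
    have ht1lb : N/((q:ℝ)^2) - 1 < (t1:ℝ) := Nat.sub_one_lt_floor _
    have hsplit : (N+2*s)/((q:ℝ)^2) = N/((q:ℝ)^2) + 2*s/((q:ℝ)^2) := by ring
    rw [hsplit] at ht2ub
    rw [hc2] at hc1
    linarith
  -- main sum estimate
  set F := (Finset.range ⌈y⌉₊).filter (fun q : ℕ => q.Prime ∧ z ≤ (q : ℝ)) with hF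
  have hsum1 : ∑ q ∈ F, ((A.filter (fun a => q ^ 2 ∣ a)).card : ℝ)
      ≤ 2*s * (∑ q ∈ F, ((q:ℝ)^2)⁻¹) + F.card := by
    calc ∑ q ∈ F, ((A.filter (fun a => q ^ 2 ∣ a)).card : ℝ)
        ≤ ∑ q ∈ F, (2*s * ((q:ℝ)^2)⁻¹ + 1) := by
          apply Finset.sum_le_sum
          intro q hq
          rw [hF, Finset.mem_filter] at hq
          have := hperq q hq.2.1 hq.2.2
          rw [div_eq_mul_inv] at this
          exact this
      _ = 2*s * (∑ q ∈ F, ((q:ℝ)^2)⁻¹) + F.card := by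
          rw [Finset.sum_add_distrib, Finset.sum_const, ← Finset.mul_sum]
          simp
  have hm31 : 31 ≤ ⌈z⌉₊ := by
    have h1 : (3400:ℕ) < ⌈z⌉₊ := Nat.lt_ceil.mpr (by exact_mod_cast hz3400)
    omega
  have hFsub : F ⊆ (Finset.Ico ⌈z⌉₊ ⌈y⌉₊).filter (fun n => Nat.Coprime 30 n) := by
    intro q hq
    simp only [hF, Finset.mem_filter, Finset.mem_range, Finset.mem_Ico] at hq ⊢
    obtain ⟨hqy, hqp, hqz⟩ := hq
    refine ⟨⟨Nat.ceil_le.mpr hqz, hqy⟩, ?_⟩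
    rw [Nat.coprime_comm]
    refine (Nat.Prime.coprime_iff_not_dvd hqp).mpr (fun hdvd => ?_)
    have hle := Nat.le_of_dvd (by norm_num) hdvd
    have h1 : (3400:ℝ) < q := lt_of_lt_of_le hz3400 hqz
    have h2 : 3400 < q := by exact_mod_cast h1
    omega
  have hsum2 : (∑ q ∈ F, ((q:ℝ)^2)⁻¹) ≤ (4/15) * ((⌈z⌉₊:ℝ) - 30)⁻¹ :=
    le_trans (Finset.sum_le_sum_of_subset_of_nonneg hFsub (fun n _ _ => by positivity))
      (sum_coprime30 _ _ hm31)
  have hzc : z ≤ (⌈z⌉₊:ℝ) := Nat.le_ceil z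
  have hz30 : (0:ℝ) < z - 30 := by linarith
  have hsum3 : ((⌈z⌉₊:ℝ) - 30)⁻¹ ≤ (z - 30)⁻¹ := by
    apply inv_anti₀ hz30; linarith
  have hFcard : (F.card : ℝ) ≤ y + 1 := by
    have h1 : F.card ≤ ⌈y⌉₊ := le_trans (Finset.card_le_card (Finset.filter_subset _ _))
      (by simp)
    have h2 : (⌈y⌉₊ : ℝ) < y + 1 := Nat.ceil_lt_add_one hy0.le
    calc (F.card : ℝ) ≤ (⌈y⌉₊:ℝ) := by exact_mod_cast h1
      _ ≤ y + 1 := h2.le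
  -- final numeric assembly
  have hT0 : (0:ℝ) ≤ ∑ q ∈ F, ((q:ℝ)^2)⁻¹ :=
    Finset.sum_nonneg (fun q hq => by positivity)
  have hTz : (∑ q ∈ F, ((q:ℝ)^2)⁻¹) ≤ 0.27 / z := by
    have hstep : (4:ℝ)/15 * ((z-30))⁻¹ ≤ 0.27 / z := by
      rw [show (4:ℝ)/15 * (z-30)⁻¹ = (4/15)/(z-30) by ring, div_le_div_iff₀ hz30 hz0]
      nlinarith
    calc (∑ q ∈ F, ((q:ℝ)^2)⁻¹) ≤ (4/15) * ((⌈z⌉₊:ℝ) - 30)⁻¹ := hsum2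
      _ ≤ (4/15) * (z - 30)⁻¹ := by
          apply mul_le_mul_of_nonneg_left hsum3 (by norm_num)
      _ ≤ 0.27 / z := hstep
  have hmain : 2*s * (∑ q ∈ F, ((q:ℝ)^2)⁻¹) ≤ 0.54 * z^3 := by
    have h1 : 2*s * (∑ q ∈ F, ((q:ℝ)^2)⁻¹) ≤ 2*z^4 * (0.27/z) := by
      apply mul_le_mul (by linarith) hTz hT0 (by positivity)
    have h2 : 2*z^4 * (0.27/z) = 0.54 * z^3 := by
      field_simp
      ring
    linarith
  have hRHS : 0.64*z^3 - 1 ≤ 0.01 * A.card * Real.log A.card / z := by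
    have hcard2 : (2:ℝ)*z^4 - 3 ≤ (A.card:ℝ) := by linarith [hcard, hz4ub]
    have hz4pos : (0:ℝ) < 2*z^4 - 3 := by linarith [hz4lb, hs14]
    have hnum : 0.01*(2*z^4-3)*32 ≤ 0.01 * A.card * Real.log A.card := by
      have h1 : 0.01*(2*z^4-3)*32 ≤ 0.01*(A.card:ℝ)*32 := by linarith [hcard2]
      have h2 := mul_le_mul_of_nonneg_left hlog
        (by positivity : (0:ℝ) ≤ 0.01*(A.card:ℝ))
      linarith
    have hdiv : 0.01*(2*z^4-3)*32/z ≤ 0.01 * A.card * Real.log A.card / z :=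
      (div_le_div_iff_of_pos_right hz0).mpr hnum
    have heq : 0.01*(2*z^4-3)*32/z = 0.64*z^3 - 0.96/z := by
      field_simp
      ring
    have hsm : 0.96/z ≤ 1 := by
      rw [div_le_one hz0]; linarith
    linarith
  calc ∑ q ∈ F, ((A.filter (fun a => q ^ 2 ∣ a)).card : ℝ)
      ≤ 2*s * (∑ q ∈ F, ((q:ℝ)^2)⁻¹) + F.card := hsum1
    _ ≤ 0.54*z^3 + (y+1) := by linarith
    _ ≤ (0.64*z^3 - 1) + 0.07*y := by rw [hyz2]; nlinarith
    _ ≤ 0.01 * A.card * Real.log A.card / z + 0.07 * y := by linarith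
end

section
/- Let z and y be real numbers with 2 ≤ z < y. Let f : ℝ → ℝ be positive and monotone on [z,y] and continuously differentiable on [z,y], let g : ℝ → ℝ be continuously differentiable on [z,y], let E be a real number, and let c : ℕ → ℝ be a nonnegative arithmetic function such that Σ_{x ≤ n < w} c(n) ≤ g(w) − g(x) + E whenever z ≤ x < w ≤ y. Then Σ_{z ≤ n < y} c(n)·f(n) ≤ ∫_z^y f(t)·g′(t) dt + E·max(f(z), f(y)). -/
open Finset Real Set MeasureTheory

lemma ae_ne_pt' (a : ℝ) : ∀ᵐ t : ℝ, t ≠ a := by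
  refine MeasureTheory.ae_iff.2 ?_
  simp [not_not]

lemma deriv_nonneg_of_monotoneOn' {f : ℝ → ℝ} {z y t d : ℝ}
    (hm : MonotoneOn f (Set.Icc z y)) (ht : t ∈ Set.Ioo z y) (hd : HasDerivAt f d t) :
    0 ≤ d := by
  have hd' : Filter.Tendsto (slope f t) (nhdsWithin t {t}ᶜ) (nhds d) :=
    hasDerivAt_iff_tendsto_slope.1 hd
  have h2 : Filter.Tendsto (slope f t) (nhdsWithin t (Set.Ioi t)) (nhds d) :=
    hd'.mono_left (nhdsWithin_mono t (fun x hx => ne_of_gt hx))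
  refine ge_of_tendsto h2 ?_
  filter_upwards [Ioo_mem_nhdsGT_of_mem (Set.mem_Ico.2 ⟨le_rfl, ht.2⟩)] with u hu
  have htu : t ≤ u := hu.1.le
  have h1 : f t ≤ f u :=
    hm ⟨ht.1.le, ht.2.le⟩ ⟨(ht.1.trans hu.1).le, hu.2.le⟩ htu
  rw [slope_def_field]
  exact div_nonneg (by linarith) (by linarith [hu.1])

open Finset Real Set MeasureTheory

/-- Partial summation bound: if `Σ_{x ≤ n < w} c(n) ≤ g(w) − g(x) + E` for all
`z ≤ x < w ≤ y`, `f` is positive and monotone on `[z,y]`, and `f, g` are continuously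
differentiable on `[z,y]`, then
`Σ_{z ≤ n < y} c(n)·f(n) ≤ ∫_z^y f(t)·g′(t) dt + E·max(f(z), f(y))`. -/
theorem partial_summation_upper_bound (z y : ℝ) (hz : 2 ≤ z) (hzy : z < y)
    (f g : ℝ → ℝ) (E : ℝ) (c : ℕ → ℝ)
    (hfpos : ∀ t ∈ Set.Icc z y, 0 < f t)
    (hfmono : MonotoneOn f (Set.Icc z y) ∨ AntitoneOn f (Set.Icc z y))
    (hf : ContDiffOn ℝ 1 f (Set.Icc z y))
    (hg : ContDiffOn ℝ 1 g (Set.Icc z y))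
    (hc : ∀ n : ℕ, 0 ≤ c n)
    (hsum : ∀ x w : ℝ, z ≤ x → x < w → w ≤ y →
      ∑ n ∈ (Finset.range ⌈w⌉₊).filter (fun n : ℕ => x ≤ (n : ℝ)), c n
        ≤ g w - g x + E) :
    ∑ n ∈ (Finset.range ⌈y⌉₊).filter (fun n : ℕ => z ≤ (n : ℝ)), c n * f n
      ≤ (∫ t in z..y, f t * deriv g t) + E * max (f z) (f y) := by
  have hzy' : z ≤ y := hzy.le
  set s : Finset ℕ := (Finset.range ⌈y⌉₊).filter (fun n : ℕ => z ≤ (n : ℝ)) with hs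
  have hsn : ∀ n ∈ s, z ≤ (n:ℝ) ∧ (n:ℝ) < y := by
    intro n hn
    simp only [hs, Finset.mem_filter, Finset.mem_range] at hn
    exact ⟨hn.2, Nat.lt_ceil.mp hn.1⟩
  set F := derivWithin f (Set.Icc z y) with hF
  set G := derivWithin g (Set.Icc z y) with hG
  have hud := uniqueDiffOn_Icc hzy
  have hFc : ContinuousOn F (Set.Icc z y) := hf.continuousOn_derivWithin hud le_rfl
  have hGc : ContinuousOn G (Set.Icc z y) := hg.continuousOn_derivWithin hud le_rfl
  have hfc : ContinuousOn f (Set.Icc z y) := hf.continuousOn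
  have hgc : ContinuousOn g (Set.Icc z y) := hg.continuousOn
  have hfd : ∀ t ∈ Set.Ioo z y, HasDerivAt f (F t) t := by
    intro t ht
    exact ((hf.differentiableOn one_ne_zero) t (Set.Ioo_subset_Icc_self ht)).hasDerivWithinAt.hasDerivAt
      (Icc_mem_nhds ht.1 ht.2)
  have hgd : ∀ t ∈ Set.Ioo z y, HasDerivAt g (G t) t := by
    intro t ht
    exact ((hg.differentiableOn one_ne_zero) t (Set.Ioo_subset_Icc_self ht)).hasDerivWithinAt.hasDerivAt
      (Icc_mem_nhds ht.1 ht.2)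
  have hFint : ∀ a b : ℝ, a ∈ Set.Icc z y → b ∈ Set.Icc z y →
      IntervalIntegrable F MeasureTheory.volume a b := by
    intro a b ha hb
    exact (hFc.mono (Set.uIcc_subset_Icc ha hb)).intervalIntegrable
  have ftc : ∀ a b : ℝ, a ∈ Set.Icc z y → b ∈ Set.Icc z y → a ≤ b →
      ∫ t in a..b, F t = f b - f a := by
    intro a b ha hb hab
    refine intervalIntegral.integral_eq_sub_of_hasDeriv_right_of_le hab
      (hfc.mono (Set.Icc_subset_Icc ha.1 hb.2)) (fun t ht => ?_) (hFint a b ha hb)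
    exact (hfd t ⟨lt_of_le_of_lt ha.1 ht.1, lt_of_lt_of_le ht.2 hb.2⟩).hasDerivWithinAt
  have hFg_int : IntervalIntegrable (fun t => F t * g t) MeasureTheory.volume z y := by
    apply ContinuousOn.intervalIntegrable
    rw [Set.uIcc_of_le hzy']
    exact hFc.mul hgc
  have hfG_int : IntervalIntegrable (fun t => f t * G t) MeasureTheory.volume z y := by
    apply ContinuousOn.intervalIntegrable
    rw [Set.uIcc_of_le hzy']
    exact hfc.mul hGc
  have ibp : ∫ t in z..y, (F t * g t + f t * G t) = f y * g y - f z * g z := by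
    refine intervalIntegral.integral_eq_sub_of_hasDeriv_right_of_le hzy'
      (hfc.mul hgc) (fun t ht => ?_) (hFg_int.add hfG_int)
    exact ((hfd t ht).mul (hgd t ht)).hasDerivWithinAt
  have hsplit : ∫ t in z..y, F t * g t
      = f y * g y - f z * g z - ∫ t in z..y, f t * G t := by
    rw [← ibp, intervalIntegral.integral_add hFg_int hfG_int]; ring
  have hgderiv : ∫ t in z..y, f t * deriv g t = ∫ t in z..y, f t * G t := by
    apply intervalIntegral.integral_congr_ae
    filter_upwards [ae_ne_pt' y] with t hty hmem
    rw [Set.uIoc_of_le hzy'] at hmem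
    have ht : t ∈ Set.Ioo z y := ⟨hmem.1, lt_of_le_of_ne hmem.2 hty⟩
    rw [(hgd t ht).deriv]
  have hC : ∑ n ∈ s, c n ≤ g y - g z + E := hsum z y le_rfl hzy le_rfl
  rcases hfmono with hm | hm
  · -- increasing case
    have hmax : max (f z) (f y) = f y :=
      max_eq_right (hm ⟨le_rfl, hzy'⟩ ⟨hzy', le_rfl⟩ hzy')
    have hFnn : ∀ t ∈ Set.Ioo z y, 0 ≤ F t :=
      fun t ht => deriv_nonneg_of_monotoneOn' hm ht (hfd t ht)
    set φ : ℕ → ℝ → ℝ := fun n t => if t < (n:ℝ) then c n * F t else 0 with hφ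
    have hφind : ∀ n : ℕ, φ n = Set.indicator (Set.Iio (n:ℝ)) (fun t => c n * F t) := by
      intro n; funext t
      simp [hφ, Set.indicator_apply, Set.mem_Iio]
    have hφint : ∀ n ∈ s, IntervalIntegrable (φ n) MeasureTheory.volume z y := by
      intro n hn
      rw [hφind n, intervalIntegrable_iff_integrableOn_Ioc_of_le hzy']
      have h1 : IntegrableOn (fun t => c n * F t) (Set.Ioc z y) MeasureTheory.volume := by
        have := (hFint z y ⟨le_rfl, hzy'⟩ ⟨hzy', le_rfl⟩).const_mul (c n)
        exact (intervalIntegrable_iff_integrableOn_Ioc_of_le hzy').1 this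
      exact h1.indicator measurableSet_Iio
    have key : ∀ n ∈ s, c n * f n = c n * f z + ∫ t in z..(y:ℝ), φ n t := by
      intro n hn
      obtain ⟨hn1, hn2⟩ := hsn n hn
      have hnI : (n:ℝ) ∈ Set.Icc z y := ⟨hn1, hn2.le⟩
      have i1 : IntervalIntegrable (φ n) MeasureTheory.volume z n :=
        (hφint n hn).mono_set (by
          rw [Set.uIcc_of_le hn1, Set.uIcc_of_le hzy']
          exact Set.Icc_subset_Icc le_rfl hn2.le)
      have i2 : IntervalIntegrable (φ n) MeasureTheory.volume n y :=
        (hφint n hn).mono_set (by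
          rw [Set.uIcc_of_le hn2.le, Set.uIcc_of_le hzy']
          exact Set.Icc_subset_Icc hn1 le_rfl)
      have e1 : ∫ t in z..(n:ℝ), φ n t = c n * (f n - f z) := by
        have e : ∫ t in z..(n:ℝ), φ n t = ∫ t in z..(n:ℝ), c n * F t := by
          apply intervalIntegral.integral_congr_ae
          filter_upwards [ae_ne_pt' (n:ℝ)] with t htn hmem
          rw [Set.uIoc_of_le hn1] at hmem
          have : t < (n:ℝ) := lt_of_le_of_ne hmem.2 htn
          simp [hφ, this]
        rw [e, intervalIntegral.integral_const_mul, ftc z n ⟨le_rfl, hzy'⟩ hnI hn1]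
      have e2 : ∫ t in (n:ℝ)..y, φ n t = 0 := by
        have e : ∫ t in (n:ℝ)..y, φ n t = ∫ t in (n:ℝ)..y, (0:ℝ) := by
          apply intervalIntegral.integral_congr
          intro t ht
          rw [Set.uIcc_of_le hn2.le] at ht
          simp [hφ, not_lt.mpr ht.1]
        rw [e, intervalIntegral.integral_zero]
      rw [← intervalIntegral.integral_add_adjacent_intervals i1 i2, e1, e2]; ring
    have S_eq : ∑ n ∈ s, c n * f n
        = (∑ n ∈ s, c n) * f z + ∫ t in z..y, (∑ n ∈ s, φ n t) := by
      rw [Finset.sum_congr rfl key, Finset.sum_add_distrib, ← Finset.sum_mul]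
      congr 1
      exact (intervalIntegral.integral_finset_sum hφint).symm
    have hRint : IntervalIntegrable (fun t => (g y - g t + E) * F t) MeasureTheory.volume z y := by
      apply ContinuousOn.intervalIntegrable
      rw [Set.uIcc_of_le hzy']
      exact (((continuousOn_const.sub hgc).add continuousOn_const).mul hFc)
    have hLint : IntervalIntegrable (fun t => ∑ n ∈ s, φ n t) MeasureTheory.volume z y := by
      have h0 := IntervalIntegrable.sum s hφint
      have e0 : (fun t => ∑ n ∈ s, φ n t) = ∑ i ∈ s, φ i := by
        funext t; simp
      rw [e0]; exact h0
    have hmono : ∫ t in z..y, (∑ n ∈ s, φ n t) ≤ ∫ t in z..y, (g y - g t + E) * F t := by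
      refine intervalIntegral.integral_mono_ae_restrict hzy' hLint hRint ?_
      filter_upwards [MeasureTheory.ae_restrict_mem measurableSet_Icc,
        MeasureTheory.ae_restrict_of_ae (ae_ne_pt' z),
        MeasureTheory.ae_restrict_of_ae (ae_ne_pt' y)] with t htI htz hty
      have ht : t ∈ Set.Ioo z y :=
        ⟨lt_of_le_of_ne htI.1 (Ne.symm htz), lt_of_le_of_ne htI.2 hty⟩
      have hfilter : (Finset.range ⌈y⌉₊).filter (fun n : ℕ => t ≤ (n:ℝ))
          = s.filter (fun n : ℕ => t ≤ (n:ℝ)) := by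
        rw [hs, Finset.filter_filter]
        apply Finset.filter_congr
        intro n _
        constructor
        · intro h; exact ⟨(ht.1.le).trans h, h⟩
        · intro h; exact h.2
      have e0 : ∑ n ∈ s.filter (fun n : ℕ => t < (n:ℝ)), (c n * F t)
          = ∑ n ∈ s, if t < (n:ℝ) then c n * F t else 0 := Finset.sum_filter _ _
      have hsum_t : ∑ n ∈ s, φ n t
          = (∑ n ∈ s.filter (fun n : ℕ => t < (n:ℝ)), c n) * F t := by
        rw [Finset.sum_mul, e0]
      have hb : ∑ n ∈ s.filter (fun n : ℕ => t < (n:ℝ)), c n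
          ≤ ∑ n ∈ s.filter (fun n : ℕ => t ≤ (n:ℝ)), c n := by
        apply Finset.sum_le_sum_of_subset_of_nonneg
        · exact Finset.monotone_filter_right s (fun n _ hn => le_of_lt hn)
        · intro n _ _; exact hc n
      have hb2 : ∑ n ∈ s.filter (fun n : ℕ => t ≤ (n:ℝ)), c n ≤ g y - g t + E := by
        rw [← hfilter]
        exact hsum t y ht.1.le ht.2 le_rfl
      rw [hsum_t]
      exact mul_le_mul_of_nonneg_right (hb.trans hb2) (hFnn t ht)
    have hR_eq : ∫ t in z..y, (g y - g t + E) * F t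
        = (g y + E) * (f y - f z) - ∫ t in z..y, F t * g t := by
      have e : ∀ t : ℝ, (g y - g t + E) * F t = (g y + E) * F t - F t * g t := by
        intro t; ring
      simp_rw [e]
      rw [intervalIntegral.integral_sub ((hFint z y ⟨le_rfl, hzy'⟩ ⟨hzy', le_rfl⟩).const_mul _) hFg_int,
        intervalIntegral.integral_const_mul, ftc z y ⟨le_rfl, hzy'⟩ ⟨hzy', le_rfl⟩ hzy']
    have hfz := hfpos z ⟨le_rfl, hzy'⟩
    have hkey : 0 ≤ f z * (g y - g z + E - ∑ n ∈ s, c n) :=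
      mul_nonneg hfz.le (by linarith)
    rw [hmax, hgderiv]
    nlinarith [S_eq, hmono, hR_eq, hsplit]
  · -- decreasing case
    have hmax : max (f z) (f y) = f z :=
      max_eq_left (hm ⟨le_rfl, hzy'⟩ ⟨hzy', le_rfl⟩ hzy')
    have hFnp : ∀ t ∈ Set.Ioo z y, F t ≤ 0 := by
      intro t ht
      have h0 : (0:ℝ) ≤ -F t :=
        deriv_nonneg_of_monotoneOn' (f := fun x => -f x) (hm.neg) ht (hfd t ht).neg
      linarith
    set φ : ℕ → ℝ → ℝ := fun n t => if (n:ℝ) < t then c n * F t else 0 with hφ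
    have hφind : ∀ n : ℕ, φ n = Set.indicator (Set.Ioi (n:ℝ)) (fun t => c n * F t) := by
      intro n; funext t
      simp [hφ, Set.indicator_apply, Set.mem_Ioi]
    have hφint : ∀ n ∈ s, IntervalIntegrable (φ n) MeasureTheory.volume z y := by
      intro n hn
      rw [hφind n, intervalIntegrable_iff_integrableOn_Ioc_of_le hzy']
      have h1 : IntegrableOn (fun t => c n * F t) (Set.Ioc z y) MeasureTheory.volume := by
        have := (hFint z y ⟨le_rfl, hzy'⟩ ⟨hzy', le_rfl⟩).const_mul (c n)
        exact (intervalIntegrable_iff_integrableOn_Ioc_of_le hzy').1 this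
      exact h1.indicator measurableSet_Ioi
    have key : ∀ n ∈ s, c n * f n = c n * f y - ∫ t in z..(y:ℝ), φ n t := by
      intro n hn
      obtain ⟨hn1, hn2⟩ := hsn n hn
      have hnI : (n:ℝ) ∈ Set.Icc z y := ⟨hn1, hn2.le⟩
      have i1 : IntervalIntegrable (φ n) MeasureTheory.volume z n :=
        (hφint n hn).mono_set (by
          rw [Set.uIcc_of_le hn1, Set.uIcc_of_le hzy']
          exact Set.Icc_subset_Icc le_rfl hn2.le)
      have i2 : IntervalIntegrable (φ n) MeasureTheory.volume n y :=
        (hφint n hn).mono_set (by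
          rw [Set.uIcc_of_le hn2.le, Set.uIcc_of_le hzy']
          exact Set.Icc_subset_Icc hn1 le_rfl)
      have e1 : ∫ t in z..(n:ℝ), φ n t = 0 := by
        have e : ∫ t in z..(n:ℝ), φ n t = ∫ t in z..(n:ℝ), (0:ℝ) := by
          apply intervalIntegral.integral_congr
          intro t ht
          rw [Set.uIcc_of_le hn1] at ht
          simp [hφ, not_lt.mpr ht.2]
        rw [e, intervalIntegral.integral_zero]
      have e2 : ∫ t in (n:ℝ)..y, φ n t = c n * (f y - f n) := by
        have e : ∫ t in (n:ℝ)..y, φ n t = ∫ t in (n:ℝ)..y, c n * F t := by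
          apply intervalIntegral.integral_congr_ae
          filter_upwards [ae_ne_pt' (n:ℝ)] with t htn hmem
          rw [Set.uIoc_of_le hn2.le] at hmem
          have : (n:ℝ) < t := hmem.1
          simp [hφ, this]
        rw [e, intervalIntegral.integral_const_mul, ftc n y hnI ⟨hzy', le_rfl⟩ hn2.le]
      rw [← intervalIntegral.integral_add_adjacent_intervals i1 i2, e1, e2]; ring
    have S_eq : ∑ n ∈ s, c n * f n
        = (∑ n ∈ s, c n) * f y - ∫ t in z..y, (∑ n ∈ s, φ n t) := by
      rw [Finset.sum_congr rfl key, Finset.sum_sub_distrib, ← Finset.sum_mul]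
      congr 1
      exact (intervalIntegral.integral_finset_sum hφint).symm
    have hRint : IntervalIntegrable (fun t => (g t - g z + E) * F t) MeasureTheory.volume z y := by
      apply ContinuousOn.intervalIntegrable
      rw [Set.uIcc_of_le hzy']
      exact (((hgc.sub continuousOn_const).add continuousOn_const).mul hFc)
    have hLint : IntervalIntegrable (fun t => ∑ n ∈ s, φ n t) MeasureTheory.volume z y := by
      have h0 := IntervalIntegrable.sum s hφint
      have e0 : (fun t => ∑ n ∈ s, φ n t) = ∑ i ∈ s, φ i := by
        funext t; simp
      rw [e0]; exact h0
    have hmono : ∫ t in z..y, (g t - g z + E) * F t ≤ ∫ t in z..y, (∑ n ∈ s, φ n t) := by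
      refine intervalIntegral.integral_mono_ae_restrict hzy' hRint hLint ?_
      filter_upwards [MeasureTheory.ae_restrict_mem measurableSet_Icc,
        MeasureTheory.ae_restrict_of_ae (ae_ne_pt' z),
        MeasureTheory.ae_restrict_of_ae (ae_ne_pt' y)] with t htI htz hty
      have ht : t ∈ Set.Ioo z y :=
        ⟨lt_of_le_of_ne htI.1 (Ne.symm htz), lt_of_le_of_ne htI.2 hty⟩
      have hfilter : (Finset.range ⌈t⌉₊).filter (fun n : ℕ => z ≤ (n:ℝ))
          = s.filter (fun n : ℕ => (n:ℝ) < t) := by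
        rw [hs, Finset.filter_filter]
        ext n
        simp only [Finset.mem_filter, Finset.mem_range, Nat.lt_ceil]
        constructor
        · intro h; exact ⟨h.1.trans ht.2, h.2, h.1⟩
        · intro h; exact ⟨h.2.2, h.2.1⟩
      have e0 : ∑ n ∈ s.filter (fun n : ℕ => (n:ℝ) < t), (c n * F t)
          = ∑ n ∈ s, if (n:ℝ) < t then c n * F t else 0 := Finset.sum_filter _ _
      have hsum_t : ∑ n ∈ s, φ n t
          = (∑ n ∈ s.filter (fun n : ℕ => (n:ℝ) < t), c n) * F t := by
        rw [Finset.sum_mul, e0]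
      have hb2 : ∑ n ∈ s.filter (fun n : ℕ => (n:ℝ) < t), c n ≤ g t - g z + E := by
        rw [← hfilter]
        exact hsum z t le_rfl ht.1 ht.2.le
      rw [hsum_t]
      exact mul_le_mul_of_nonpos_right hb2 (hFnp t ht)
    have hR_eq : ∫ t in z..y, (g t - g z + E) * F t
        = (∫ t in z..y, F t * g t) - (g z - E) * (f y - f z) := by
      have e : ∀ t : ℝ, (g t - g z + E) * F t = F t * g t - (g z - E) * F t := by
        intro t; ring
      simp_rw [e]
      rw [intervalIntegral.integral_sub hFg_int ((hFint z y ⟨le_rfl, hzy'⟩ ⟨hzy', le_rfl⟩).const_mul _),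
        intervalIntegral.integral_const_mul, ftc z y ⟨le_rfl, hzy'⟩ ⟨hzy', le_rfl⟩ hzy']
    have hfy := hfpos y ⟨hzy', le_rfl⟩
    have hkey : 0 ≤ f y * (g y - g z + E - ∑ n ∈ s, c n) :=
      mul_nonneg hfy.le (by linarith)
    rw [hmax, hgderiv]
    nlinarith [S_eq, hmono, hR_eq, hsplit]
end

section
/- For all real D ≥ 4·10¹⁰, Σ_{d < 2D} μ(d)² < 1.216·D. -/
set_option maxHeartbeats 1000000

open ArithmeticFunction Real Finset

private lemma summable_moeb : Summable (fun d : ℕ => (moebius d : ℝ) / d ^ 2) := by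
  apply Summable.of_abs
  apply Summable.of_nonneg_of_le (fun n => abs_nonneg _) (fun n => ?_)
    (Real.summable_one_div_nat_pow.mpr one_lt_two)
  rcases Nat.eq_zero_or_pos n with h | h
  · simp [h]
  rw [abs_div, abs_of_nonneg (by positivity : (0:ℝ) ≤ (n:ℝ)^2)]
  apply div_le_div_of_nonneg_right ?_ (by positivity)
  exact_mod_cast (abs_moebius_le_one (n := n))

private lemma tsum_moeb : ∑' d : ℕ, (moebius d : ℝ) / d ^ 2 = 6 / π ^ 2 := by
  have h2 : (1:ℝ) < (2:ℂ).re := by norm_num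
  have hz : riemannZeta 2 * LSeries (fun n => (moebius n : ℂ)) 2 = 1 := by
    rw [← LSeries_zeta_eq_riemannZeta h2]
    exact LSeries_zeta_mul_Lseries_moebius h2
  have hzne : riemannZeta 2 ≠ 0 := by
    rw [riemannZeta_two]
    intro h
    field_simp at h
    exact Real.pi_ne_zero (by simpa using h)
  have hL : LSeries (fun n => (moebius n : ℂ)) 2 = 6 / (π:ℂ)^2 := by
    have hpi : ((π:ℂ))^2 ≠ 0 := by
      intro h
      have : (π:ℝ)^2 = 0 := by exact_mod_cast h
      exact Real.pi_ne_zero (pow_eq_zero_iff (n:=2) (by norm_num) |>.mp this)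
    rw [riemannZeta_two] at hz
    field_simp at hz ⊢
    linear_combination hz
  have hterm : ∀ n : ℕ, LSeries.term (fun n => (moebius n : ℂ)) 2 n
      = ((moebius n : ℝ) / n ^ 2 : ℝ) := by
    intro n
    rcases Nat.eq_zero_or_pos n with h | h
    · simp [h, LSeries.term]
    · rw [LSeries.term_of_ne_zero h.ne']
      rw [show ((2:ℂ)) = ((2:ℕ):ℂ) by norm_num, Complex.cpow_natCast]
      push_cast
      ring
  have : LSeries (fun n => (moebius n : ℂ)) 2
      = ((∑' d : ℕ, (moebius d : ℝ) / d ^ 2 : ℝ) : ℂ) := by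
    rw [LSeries, Complex.ofReal_tsum]
    exact tsum_congr hterm
  rw [this] at hL
  exact_mod_cast hL

private lemma head_le {K : ℕ} (hK : 1 ≤ K) :
    ∑ d ∈ range (K + 1), (moebius d : ℝ) / d ^ 2 ≤ 6 / π ^ 2 + 1 / K := by
  have hsum := summable_moeb
  have hsplit := Summable.sum_add_tsum_nat_add (f := fun d : ℕ => (moebius d : ℝ) / d ^ 2) (K + 1) hsum
  rw [tsum_moeb] at hsplit
  beta_reduce at hsplit
  have htail : |∑' i : ℕ, (moebius (i + (K + 1)) : ℝ) / (i + (K + 1) : ℕ) ^ 2| ≤ 1 / K := by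
    calc |∑' i : ℕ, (moebius (i + (K + 1)) : ℝ) / (i + (K + 1) : ℕ) ^ 2|
        ≤ ∑' i : ℕ, |(moebius (i + (K + 1)) : ℝ) / (i + (K + 1) : ℕ) ^ 2| := by
          have h4 := norm_tsum_le_tsum_norm
            (f := fun i : ℕ => (moebius (i + (K + 1)) : ℝ) / ((i + (K + 1) : ℕ) : ℝ) ^ 2)
            ((summable_nat_add_iff (f := fun d : ℕ => |(moebius d : ℝ) / d ^ 2|) (K+1)).mpr
              summable_moeb.abs)
          simpa only [Real.norm_eq_abs] using h4
      _ ≤ 1 / K := by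
          apply Real.tsum_le_of_sum_range_le (fun n => abs_nonneg _)
          intro n
          have h1 : ∀ i ∈ range n, |(moebius (i + (K + 1)) : ℝ) / (i + (K + 1) : ℕ) ^ 2|
              ≤ (((i + (K + 1) : ℕ) : ℝ) ^ 2)⁻¹ := by
            intro i _
            rw [abs_div, abs_of_nonneg (by positivity : (0:ℝ) ≤ ((i + (K+1):ℕ):ℝ)^2),
              div_eq_mul_inv]
            have : |(moebius (i + (K + 1)) : ℝ)| ≤ 1 := by
              exact_mod_cast (abs_moebius_le_one (n := i + (K + 1)))
            nlinarith [inv_nonneg.mpr (by positivity : (0:ℝ) ≤ ((i + (K+1):ℕ):ℝ)^2)]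
          calc ∑ i ∈ range n, |(moebius (i + (K + 1)) : ℝ) / (i + (K + 1) : ℕ) ^ 2|
              ≤ ∑ i ∈ range n, (((i + (K + 1) : ℕ) : ℝ) ^ 2)⁻¹ := Finset.sum_le_sum h1
            _ = ∑ j ∈ Ioc K (K + n), ((j : ℝ) ^ 2)⁻¹ := by
                rw [show Ioc K (K + n) = Ico (K + 1) (K + 1 + n) by ext x; simp [Nat.lt_succ_iff]; omega,
                  Finset.sum_Ico_eq_sum_range]
                simp only [Nat.add_sub_cancel_left]
                apply Finset.sum_congr rfl
                intro i _
                push_cast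
                ring
            _ ≤ ((K:ℝ))⁻¹ - ((K + n : ℕ):ℝ)⁻¹ := sum_Ioc_inv_sq_le_sub (by omega) (by omega)
            _ ≤ 1 / K := by
                have : (0:ℝ) ≤ ((K + n : ℕ):ℝ)⁻¹ := by positivity
                rw [one_div]
                linarith
  have habs := abs_le.mp htail
  linarith [hsplit]

private lemma sq_dvd_iff {a b n d : ℕ} (hn : n ≠ 0) (hab : b ^ 2 * a = n) (ha : Squarefree a) :
    d ^ 2 ∣ n ↔ d ∣ b := by
  have hb0 : b ≠ 0 := by rintro rfl; simp at hab; omega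
  have ha0 : a ≠ 0 := by rintro rfl; simp at hab; omega
  constructor
  · intro hd
    have hd0 : d ≠ 0 := by
      rintro rfl; rw [pow_two, Nat.mul_zero] at hd; exact hn (Nat.eq_zero_of_zero_dvd hd)
    rw [← Nat.factorization_le_iff_dvd hd0 hb0]
    have h2 := (Nat.factorization_le_iff_dvd (pow_ne_zero 2 hd0) hn).mpr hd
    intro p
    have h3 := h2 p
    rw [← hab, Nat.factorization_mul (pow_ne_zero 2 hb0) ha0, Nat.factorization_pow,
      Nat.factorization_pow] at h3
    have h4 : a.factorization p ≤ 1 := Squarefree.natFactorization_le_one p ha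
    simp only [Finsupp.coe_add, Finsupp.coe_smul, Pi.add_apply, Pi.smul_apply, smul_eq_mul] at h3
    omega
  · intro hd
    calc d ^ 2 ∣ b ^ 2 := pow_dvd_pow_of_dvd hd 2
    _ ∣ n := hab ▸ Dvd.intro a rfl

private lemma pointwise {n N : ℕ} (hn : n ≠ 0) (hnN : n < N) :
    (moebius n) ^ 2 = ∑ d ∈ range N, if d ^ 2 ∣ n then moebius d else 0 := by
  obtain ⟨a, b, hab, ha⟩ := Nat.sq_mul_squarefree n
  have hb0 : b ≠ 0 := by rintro rfl; simp at hab; omega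
  have ha0 : a ≠ 0 := by rintro rfl; simp at hab; omega
  have hbn : b < N := by
    have : b ≤ b ^ 2 * a := by
      nlinarith [Nat.one_le_iff_ne_zero.mpr ha0, Nat.one_le_iff_ne_zero.mpr hb0]
    omega
  have hset : ∑ d ∈ range N, (if d ^ 2 ∣ n then moebius d else 0)
      = ∑ d ∈ b.divisors, moebius d := by
    rw [← Finset.sum_filter]
    apply Finset.sum_congr ?_ (fun _ _ => rfl)
    ext d
    simp only [mem_filter, mem_range, Nat.mem_divisors, sq_dvd_iff hn hab ha]
    constructor
    · rintro ⟨_, h⟩; exact ⟨h, hb0⟩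
    · rintro ⟨h, _⟩
      exact ⟨lt_of_le_of_lt (Nat.le_of_dvd (Nat.pos_of_ne_zero hb0) h) hbn, h⟩
  have hdiv : ∑ d ∈ b.divisors, moebius d = if b = 1 then 1 else 0 := by
    have h := congrArg (fun f : ArithmeticFunction ℤ => f b) moebius_mul_coe_zeta
    simp only [coe_mul_zeta_apply, one_apply] at h
    exact h
  rw [hset, hdiv]
  by_cases hb1 : b = 1
  · subst hb1
    simp only [one_pow, one_mul] at hab
    subst hab
    simp [moebius_sq_eq_one_of_squarefree ha]
  · have : ¬ Squarefree n := by
      obtain ⟨p, hp, hpb⟩ := Nat.exists_prime_and_dvd hb1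
      intro hsq
      exact hp.not_isUnit (hsq p (by
        have : p ^ 2 ∣ n := (sq_dvd_iff hn hab ha).mpr hpb
        rwa [pow_two] at this))
    simp [moebius_eq_zero_of_not_squarefree this, hb1]

private lemma ident {N : ℕ} (hN : 1 ≤ N) :
    ∑ n ∈ range N, (moebius n) ^ 2
      = ∑ d ∈ range N, moebius d * ((N - 1) / d ^ 2 : ℕ) := by
  have h1 : ∑ n ∈ range N, (moebius n) ^ 2 = ∑ n ∈ Ioc 0 (N-1), (moebius n) ^ 2 := by
    have : range N = insert 0 (Ioc 0 (N-1)) := by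
      ext x; simp only [Finset.mem_range, Finset.mem_Ioc, Finset.mem_insert]; omega
    rw [this, Finset.sum_insert (by simp)]
    simp
  rw [h1]
  have h2 : ∀ n ∈ Ioc 0 (N-1), (moebius n) ^ 2
      = ∑ d ∈ range N, if d ^ 2 ∣ n then moebius d else 0 := by
    intro n hn
    simp only [mem_Ioc] at hn
    exact pointwise (by omega) (by omega)
  rw [Finset.sum_congr rfl h2, Finset.sum_comm]
  apply Finset.sum_congr rfl
  intro d _
  rw [← Finset.sum_filter, Finset.sum_const, ← Nat.Ioc_filter_dvd_card_eq_div]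
  simp [mul_comm]

/-- For all real `D ≥ 4·10¹⁰`, `Σ_{d < 2D} μ(d)² < 1.216·D`. -/
theorem squarefree_count_lt (D : ℝ) (hD : 4 * 10 ^ 10 ≤ D) :
    (∑ d ∈ Finset.range ⌈2 * D⌉₊, ((moebius d : ℝ) ^ 2)) < 1.216 * D := by
  set N := ⌈2 * D⌉₊ with hNdef
  have hD0 : (0:ℝ) ≤ 2 * D := by linarith
  have hN1 : (2 * D : ℝ) ≤ N := Nat.le_ceil _
  have hN2 : (N : ℝ) < 2 * D + 1 := Nat.ceil_lt_add_one hD0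
  have hNbig : 80000000000 ≤ N := by
    have : (80000000000 : ℝ) ≤ (N : ℝ) := by linarith
    exact_mod_cast this
  set M := N - 1 with hMdef
  have hMbig : 79999999999 ≤ M := by omega
  have hMR : (M : ℝ) ≤ 2 * D := by
    have : (M : ℝ) = (N : ℝ) - 1 := by
      rw [hMdef]; push_cast [Nat.cast_sub (by omega : 1 ≤ N)]; ring
    linarith
  set K := Nat.sqrt M with hKdef
  have hKlow : 282842 ≤ K := by
    rw [hKdef]
    rw [Nat.le_sqrt']
    calc 282842 * 282842 = 79999596964 := by norm_num
    _ ≤ M := by omega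
  have hKsq : K * K ≤ M := by simpa [pow_two] using Nat.sqrt_le' M
  have hKM : K + 1 ≤ N := by
    have : K ≤ M := le_trans (Nat.le_mul_of_pos_left K (by omega)) hKsq
    omega
  -- the main identity
  have hid : (∑ d ∈ Finset.range N, ((moebius d : ℝ) ^ 2))
      = ∑ d ∈ range N, (moebius d : ℝ) * ((M / d ^ 2 : ℕ) : ℝ) := by
    have := ident (N := N) (by omega)
    have hcast := congrArg (fun z : ℤ => (z : ℝ)) this
    push_cast at hcast
    exact hcast
  rw [hid]
  -- split the sum
  have hsplit : ∑ d ∈ range N, (moebius d : ℝ) * ((M / d ^ 2 : ℕ) : ℝ)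
      = (∑ d ∈ range (K+1), (moebius d : ℝ) * ((M / d ^ 2 : ℕ) : ℝ))
        + ∑ d ∈ Ico (K+1) N, (moebius d : ℝ) * ((M / d ^ 2 : ℕ) : ℝ) := by
    rw [Finset.range_eq_Ico, ← Finset.sum_Ico_consecutive _ (Nat.zero_le (K+1)) hKM,
      ← Finset.range_eq_Ico]
  rw [hsplit]
  -- head bound
  have hhead : ∑ d ∈ range (K+1), (moebius d : ℝ) * ((M / d ^ 2 : ℕ) : ℝ)
      ≤ (M : ℝ) * (6 / π ^ 2 + 1 / K) + (K + 1) := by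
    have hpt : ∀ d ∈ range (K+1), (moebius d : ℝ) * ((M / d ^ 2 : ℕ) : ℝ)
        ≤ (M : ℝ) * ((moebius d : ℝ) / (d:ℝ) ^ 2) + 1 := by
      intro d _
      have hcd : ((M / d ^ 2 : ℕ) : ℝ) ≤ (M : ℝ) / (d:ℝ) ^ 2 := by
        have := Nat.cast_div_le (m := M) (n := d ^ 2) (α := ℝ)
        push_cast at this
        exact this
      rcases moebius_eq_or d with h | h | h
      · simp [h]
      · rw [h]
        push_cast
        rw [one_mul]
        have : (M:ℝ) * ((1:ℝ) / (d:ℝ)^2) = (M:ℝ)/(d:ℝ)^2 := by ring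
        rw [this]
        linarith
      · rw [h]
        push_cast
        rcases Nat.eq_zero_or_pos d with hd0 | hd0
        · subst hd0
          simp
        · have hlt : (M : ℝ) / (d:ℝ)^2 < ((M / d ^ 2 : ℕ) : ℝ) + 1 := by
            rw [div_lt_iff₀ (by positivity : (0:ℝ) < (d:ℝ)^2)]
            have h1 : M < d ^ 2 * (M / d ^ 2) + d ^ 2 := by
              have := Nat.div_add_mod M (d ^ 2)
              have := Nat.mod_lt M (y := d ^ 2) (by positivity)
              omega
            have h2 : (M:ℝ) < ((d ^ 2 * (M / d ^ 2) + d ^ 2 : ℕ) : ℝ) := by exact_mod_cast h1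
            push_cast at h2
            nlinarith
          have : (M:ℝ) * ((-1:ℝ) / (d:ℝ)^2) = -((M:ℝ)/(d:ℝ)^2) := by ring
          rw [this]
          linarith
    calc ∑ d ∈ range (K+1), (moebius d : ℝ) * ((M / d ^ 2 : ℕ) : ℝ)
        ≤ ∑ d ∈ range (K+1), ((M : ℝ) * ((moebius d : ℝ) / (d:ℝ) ^ 2) + 1) :=
          Finset.sum_le_sum hpt
      _ = (M : ℝ) * (∑ d ∈ range (K+1), (moebius d : ℝ) / (d:ℝ) ^ 2) + (K + 1) := by
          rw [Finset.sum_add_distrib, Finset.sum_const, Finset.card_range, ← Finset.mul_sum]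
          push_cast
          ring
      _ ≤ (M : ℝ) * (6 / π ^ 2 + 1 / K) + (K + 1) := by
          have hS := head_le (K := K) (by omega)
          have hM0 : (0:ℝ) ≤ (M:ℝ) := Nat.cast_nonneg M
          nlinarith
  -- tail bound
  have htail : ∑ d ∈ Ico (K+1) N, (moebius d : ℝ) * ((M / d ^ 2 : ℕ) : ℝ)
      ≤ (M : ℝ) * (1 / K) := by
    have hpt : ∀ d ∈ Ico (K+1) N, (moebius d : ℝ) * ((M / d ^ 2 : ℕ) : ℝ)
        ≤ (M : ℝ) * ((d:ℝ) ^ 2)⁻¹ := by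
      intro d _
      have hcd : ((M / d ^ 2 : ℕ) : ℝ) ≤ (M : ℝ) / (d:ℝ) ^ 2 := by
        have := Nat.cast_div_le (m := M) (n := d ^ 2) (α := ℝ)
        push_cast at this
        exact this
      have hnn : (0:ℝ) ≤ ((M / d ^ 2 : ℕ) : ℝ) := Nat.cast_nonneg _
      have habs : (moebius d : ℝ) ≤ 1 := by
        have := abs_moebius_le_one (n := d)
        have : |(moebius d : ℝ)| ≤ 1 := by exact_mod_cast this
        exact le_trans (le_abs_self _) this
      calc (moebius d : ℝ) * ((M / d ^ 2 : ℕ) : ℝ) ≤ 1 * ((M / d ^ 2 : ℕ) : ℝ) := by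
            nlinarith
        _ = ((M / d ^ 2 : ℕ) : ℝ) := one_mul _
        _ ≤ (M : ℝ) / (d:ℝ) ^ 2 := hcd
        _ = (M : ℝ) * ((d:ℝ) ^ 2)⁻¹ := by rw [div_eq_mul_inv]
    calc ∑ d ∈ Ico (K+1) N, (moebius d : ℝ) * ((M / d ^ 2 : ℕ) : ℝ)
        ≤ ∑ d ∈ Ico (K+1) N, (M : ℝ) * ((d:ℝ) ^ 2)⁻¹ := Finset.sum_le_sum hpt
      _ = (M : ℝ) * ∑ d ∈ Ioc K M, ((d:ℝ) ^ 2)⁻¹ := by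
          rw [← Finset.mul_sum]
          congr 1
          apply Finset.sum_congr ?_ (fun _ _ => rfl)
          ext x; simp only [mem_Ico, mem_Ioc]; omega
      _ ≤ (M : ℝ) * (((K:ℝ))⁻¹ - ((M:ℝ))⁻¹) := by
          apply mul_le_mul_of_nonneg_left (sum_Ioc_inv_sq_le_sub (by omega) (by omega))
            (Nat.cast_nonneg M)
      _ ≤ (M : ℝ) * (1 / K) := by
          apply mul_le_mul_of_nonneg_left ?_ (Nat.cast_nonneg M)
          have : (0:ℝ) ≤ ((M:ℝ))⁻¹ := by positivity
          rw [one_div]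
          linarith
  -- final numeric estimate
  have hpi : (9.8696 : ℝ) < π ^ 2 := by
    nlinarith [Real.pi_gt_d6]
  have hpi0 : (0:ℝ) < π ^ 2 := by positivity
  have hKr : (282842 : ℝ) ≤ (K : ℝ) := by exact_mod_cast hKlow
  have hKr0 : (0:ℝ) < (K : ℝ) := by linarith
  have hKsqR : (K : ℝ) * (K : ℝ) ≤ (M : ℝ) := by exact_mod_cast hKsq
  have hM0 : (0:ℝ) ≤ (M : ℝ) := Nat.cast_nonneg M
  have e1 : (M : ℝ) * (6 / π ^ 2) ≤ (M : ℝ) * 0.6079305 := by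
    apply mul_le_mul_of_nonneg_left ?_ hM0
    rw [div_le_iff₀ hpi0]
    nlinarith
  have e2 : (M : ℝ) * (1 / K) ≤ (M : ℝ) / 282842 := by
    rw [mul_one_div]
    apply div_le_div_of_nonneg_left hM0 (by norm_num) hKr
  have e3 : (K : ℝ) ≤ (M : ℝ) / 282842 := by
    rw [le_div_iff₀ (by norm_num : (0:ℝ) < 282842)]
    nlinarith
  have hsum1 : (M : ℝ) * (6 / π ^ 2 + 1 / K) = (M:ℝ) * (6 / π ^ 2) + (M:ℝ) * (1 / K) := by
    ring
  have hMD : (M : ℝ) / 282842 ≤ 2 * D / 282842 := by linarith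
  have hD4 : (2 * D) / 282842 ≤ D * 0.00000708 := by
    rw [div_le_iff₀ (by norm_num : (0:ℝ) < 282842)]
    nlinarith
  have hfin : (M:ℝ) * 0.6079305 ≤ 1.215861 * D := by nlinarith
  calc ∑ d ∈ range (K + 1), (moebius d : ℝ) * ((M / d ^ 2 : ℕ) : ℝ)
        + ∑ d ∈ Ico (K+1) N, (moebius d : ℝ) * ((M / d ^ 2 : ℕ) : ℝ)
      ≤ ((M : ℝ) * (6 / π ^ 2 + 1 / K) + (K + 1)) + (M : ℝ) * (1 / K) := by linarith
    _ < 1.216 * D := by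
        rw [hsum1]
        linarith
end
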